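/- arXiv:2509.14091 — 5 statements merged into one kernel-verified Lean document; each statement's English description precedes it below -/
import Mathlib

section
/- Consider a generalised reachability game on a game arena with start vertex s whose target sets are exactly the singletons {t_1}, ..., {t_n}. Then Eve wins the game if and only if (i) the attractors Attr({t_1}), ..., Attr({t_n}) form a chain under inclusion, i.e., for all i, j either Attr({t_i}) ⊆ Attr({t_j}) or Attr({t_j}) ⊆ Attr({t_i}), and (ii) s ∈ Attr({t_i}) for every i. -/
/-!
If Eve wins, `s` lies in every `Attr {tᵢ}`: from outside an attractor Adam can always stay
outside it, since no move of Eve enters it. Suppose `a ∉ Attr {b}` and `b ∉ Attr {a}`. Adam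
keeps the play out of `Attr {b}` until `b` has been visited and out of `Attr {a}` afterwards;
then whichever of `a`, `b` is reached first, the other is never reached. So any two targets are
comparable, `a ∈ Attr {b}` say, and then `Attr {a} ⊆ Attr {b}` by minimality of the attractor.

Conversely, Eve plays the attractor strategy towards a not yet visited target whose attractor
is least. By the chain condition the play then stays in the attractors of all unvisited
targets. Once the set of unvisited targets has stabilised, the target chased is fixed and its
attractor rank strictly decreases at every step, which cannot go on forever.
-/

/-- A game arena: a finite directed graph in which every vertex has at least one
outgoing edge, together with the set of vertices controlled by Eve (the remaining
vertices are controlled by Adam). -/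
structure Arena (V : Type*) [Fintype V] where
  E : V → V → Prop
  VEve : Set V
  succ_nonempty : ∀ v, ∃ w, E v w

variable {V : Type*} [Fintype V]

/-- An infinite play starting from `s`. -/
def IsPlay (A : Arena V) (s : V) (p : ℕ → V) : Prop :=
  p 0 = s ∧ ∀ i, A.E (p i) (p (i + 1))

/-- The play `p` visits the set `S`. -/
def Visits (p : ℕ → V) (S : Set V) : Prop := ∃ i, p i ∈ S

/-- A strategy maps a history (the sequence of previously visited vertices)
together with the current vertex to a next vertex. -/
def Strategy (V : Type*) : Type _ := List V → V → V

/-- A strategy is valid if it always moves along an edge. -/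
def ValidStrategy (A : Arena V) (σ : Strategy V) : Prop :=
  ∀ h v, A.E v (σ h v)

/-- The history `v_0 ... v_{i-1}` of the play `p` before time `i`. -/
def hist (p : ℕ → V) (i : ℕ) : List V := List.ofFn fun j : Fin i => p j

/-- The play `p` is consistent with the Eve-strategy `σ`. -/
def ConsistentEve (A : Arena V) (σ : Strategy V) (p : ℕ → V) : Prop :=
  ∀ i, p i ∈ A.VEve → p (i + 1) = σ (hist p i) (p i)

/-- The play `p` is consistent with the Adam-strategy `σ`. -/
def ConsistentAdam (A : Arena V) (σ : Strategy V) (p : ℕ → V) : Prop :=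
  ∀ i, p i ∉ A.VEve → p (i + 1) = σ (hist p i) (p i)

/-- The `i`-step Eve-attractor of the set `S`. -/
def AttrN (A : Arena V) (S : Set V) : ℕ → Set V
  | 0 => S
  | i + 1 => AttrN A S i ∪ {u | u ∈ A.VEve ∧ ∃ v, A.E u v ∧ v ∈ AttrN A S i}
      ∪ {u | u ∉ A.VEve ∧ ∀ v, A.E u v → v ∈ AttrN A S i}

/-- The Eve-attractor of the set `S`. -/
def Attr (A : Arena V) (S : Set V) : Set V := ⋃ i, AttrN A S i

/-- Eve wins the generalised reachability game with target sets `F i`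
from `s` if she has a strategy such that every consistent play from `s`
visits every target set. -/
def EveWins {ι : Type*} (A : Arena V) (s : V) (F : ι → Set V) : Prop :=
  ∃ σ : Strategy V, ValidStrategy A σ ∧
    ∀ p, IsPlay A s p → ConsistentEve A σ p → ∀ i, Visits p (F i)

section History

variable {α : Type*} {p : ℕ → α} {m : ℕ} {a : α}

theorem hist_succ (p : ℕ → α) (m : ℕ) : hist p (m + 1) = hist p m ++ [p m] := by
  rw [hist, List.ofFn_succ', List.concat_eq_append]
  rfl

theorem mem_cons_hist : a ∈ p m :: hist p m ↔ ∃ k ≤ m, p k = a := by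
  simp only [List.mem_cons, hist, List.mem_ofFn]
  constructor
  · rintro (rfl | ⟨k, rfl⟩)
    exacts [⟨m, le_rfl, rfl⟩, ⟨k, k.isLt.le, rfl⟩]
  · rintro ⟨k, hk, rfl⟩
    rcases hk.eq_or_lt with rfl | hk
    exacts [Or.inl rfl, Or.inr ⟨⟨k, hk⟩, rfl⟩]

def pending (X : Set α) (p : ℕ → α) (m : ℕ) : Set α := {x ∈ X | x ∉ p m :: hist p m}

theorem pending_antitone (X : Set α) (p : ℕ → α) : Antitone (pending X p) :=
  antitone_nat_of_succ_le fun m x ⟨hxX, hx⟩ => ⟨hxX, fun h => hx <| by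
    obtain ⟨k, hk, hkx⟩ := mem_cons_hist.1 h
    exact mem_cons_hist.2 ⟨k, hk.trans m.le_succ, hkx⟩⟩

end History

namespace Arena

variable (A : Arena V)

section Attractor

variable {S T : Set V} {v w : V}

theorem attrN_mono (S : Set V) : Monotone (AttrN A S) :=
  monotone_nat_of_le_succ fun _ _ h => Or.inl (Or.inl h)

theorem attrN_subset_attr (S : Set V) (i : ℕ) : AttrN A S i ⊆ Attr A S :=
  Set.subset_iUnion (AttrN A S) i

theorem subset_attr (S : Set V) : S ⊆ Attr A S :=
  A.attrN_subset_attr S 0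

theorem exists_attr_eq_attrN (S : Set V) : ∃ N, Attr A S = AttrN A S N := by
  obtain ⟨N, hN⟩ := WellFoundedGT.monotone_chain_condition ⟨AttrN A S, A.attrN_mono S⟩
  refine ⟨N, (Set.iUnion_subset fun i => ?_).antisymm (A.attrN_subset_attr S N)⟩
  rcases le_total i N with h | h
  exacts [A.attrN_mono S h, (hN i h).ge]

theorem mem_attr_of_mem_VEve (hv : v ∈ A.VEve) (hvw : A.E v w) (hw : w ∈ Attr A S) :
    v ∈ Attr A S := by
  obtain ⟨N, hN⟩ := A.exists_attr_eq_attrN S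
  rw [hN] at hw
  exact A.attrN_subset_attr S (N + 1) (Or.inl (Or.inr ⟨hv, w, hvw, hw⟩))

theorem mem_attr_of_forall_succ (hv : v ∉ A.VEve) (h : ∀ w, A.E v w → w ∈ Attr A S) :
    v ∈ Attr A S := by
  obtain ⟨N, hN⟩ := A.exists_attr_eq_attrN S
  rw [hN] at h
  exact A.attrN_subset_attr S (N + 1) (Or.inr ⟨hv, h⟩)

theorem exists_succ_notMem_attr (hv : v ∉ A.VEve) (hvS : v ∉ Attr A S) :
    ∃ w, A.E v w ∧ w ∉ Attr A S := by
  by_contra! h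
  exact hvS (A.mem_attr_of_forall_succ hv h)

theorem attr_subset_attr (h : S ⊆ Attr A T) : Attr A S ⊆ Attr A T :=
  Set.iUnion_subset fun i => by
    induction i with
    | zero => exact h
    | succ i ih =>
      rintro v ((hv | ⟨hE, w, hvw, hw⟩) | ⟨hA, hall⟩)
      exacts [ih hv, A.mem_attr_of_mem_VEve hE hvw (ih hw),
        A.mem_attr_of_forall_succ hA fun w hw => ih (hall w hw)]

/-- Junk value `0` outside `Attr A S`. -/
noncomputable def attrRank (S : Set V) (v : V) : ℕ := sInf {i | v ∈ AttrN A S i}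

theorem exists_attrRank_eq_succ (hv : v ∈ Attr A S) (hvS : v ∉ S) :
    ∃ i, A.attrRank S v = i + 1 ∧
      ((v ∈ A.VEve ∧ ∃ w, A.E v w ∧ w ∈ AttrN A S i) ∨
        (v ∉ A.VEve ∧ ∀ w, A.E v w → w ∈ AttrN A S i)) := by
  have hmem : v ∈ AttrN A S (A.attrRank S v) := Nat.sInf_mem (Set.mem_iUnion.1 hv)
  obtain ⟨i, hi⟩ : ∃ i, A.attrRank S v = i + 1 :=
    Nat.exists_eq_succ_of_ne_zero fun h0 => hvS (by rwa [h0] at hmem)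
  rw [hi] at hmem
  rcases hmem with (hvi | hE) | hA
  · have : i + 1 ≤ i := hi ▸ Nat.sInf_le hvi
    omega
  exacts [⟨i, hi, Or.inl hE⟩, ⟨i, hi, Or.inr hA⟩]

theorem exists_succ_attrRank_lt (hv : v ∈ Attr A S) (hvS : v ∉ S) (hE : v ∈ A.VEve) :
    ∃ w, A.E v w ∧ w ∈ Attr A S ∧ A.attrRank S w < A.attrRank S v := by
  obtain ⟨i, hi, ⟨-, w, hvw, hw⟩ | ⟨hA, -⟩⟩ := A.exists_attrRank_eq_succ hv hvS
  · exact ⟨w, hvw, A.attrN_subset_attr S i hw, hi ▸ Nat.lt_succ_of_le (Nat.sInf_le hw)⟩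
  · exact absurd hE hA

theorem attrRank_lt_of_notMem_VEve (hv : v ∈ Attr A S) (hvS : v ∉ S) (hA : v ∉ A.VEve)
    (hvw : A.E v w) : w ∈ Attr A S ∧ A.attrRank S w < A.attrRank S v := by
  obtain ⟨i, hi, ⟨hE, -⟩ | ⟨-, hall⟩⟩ := A.exists_attrRank_eq_succ hv hvS
  · exact absurd hE hA
  · exact ⟨A.attrN_subset_attr S i (hall w hvw),
      hi ▸ Nat.lt_succ_of_le (Nat.sInf_le (hall w hvw))⟩

end Attractor

section Moves

variable {P : V → Prop} {v : V}

open Classical in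
noncomputable def moveTo (P : V → Prop) (v : V) : V :=
  if h : ∃ w, A.E v w ∧ P w then h.choose else (A.succ_nonempty v).choose

theorem edge_moveTo (P : V → Prop) (v : V) : A.E v (A.moveTo P v) := by
  unfold moveTo
  split
  next h => exact h.choose_spec.1
  next => exact (A.succ_nonempty v).choose_spec

theorem moveTo_spec (h : ∃ w, A.E v w ∧ P w) : P (A.moveTo P v) := by
  rw [moveTo, dif_pos h]
  exact h.choose_spec.2

noncomputable def attrMove (T : Set V) (v : V) : V :=
  A.moveTo (fun w => w ∈ Attr A T ∧ A.attrRank T w < A.attrRank T v) v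

noncomputable def escapeMove (T : Set V) (v : V) : V :=
  A.moveTo (· ∉ Attr A T) v

end Moves

section Plays

open Classical in
/-- Pairs (history, current vertex) along the play in which Eve follows `σ` and Adam `τ`. -/
noncomputable def outcomeAux (σ τ : Strategy V) (s : V) : ℕ → List V × V
  | 0 => ([], s)
  | m + 1 =>
    let (h, v) := outcomeAux σ τ s m
    (h ++ [v], if v ∈ A.VEve then σ h v else τ h v)

noncomputable def outcome (σ τ : Strategy V) (s : V) (m : ℕ) : V :=
  (A.outcomeAux σ τ s m).2

variable {σ τ : Strategy V} {s : V}

theorem outcomeAux_fst (m : ℕ) : (A.outcomeAux σ τ s m).1 = hist (A.outcome σ τ s) m := by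
  induction m with
  | zero => simp [outcomeAux, hist]
  | succ m ih => rw [hist_succ, ← ih]; rfl

open Classical in
theorem outcome_succ (m : ℕ) :
    A.outcome σ τ s (m + 1) =
      if A.outcome σ τ s m ∈ A.VEve then σ (hist (A.outcome σ τ s) m) (A.outcome σ τ s m)
      else τ (hist (A.outcome σ τ s) m) (A.outcome σ τ s m) := by
  rw [← outcomeAux_fst]
  rfl

theorem isPlay_outcome (hσ : ValidStrategy A σ) (hτ : ValidStrategy A τ) :
    IsPlay A s (A.outcome σ τ s) := by
  refine ⟨rfl, fun i => ?_⟩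
  rw [outcome_succ]
  split
  exacts [hσ _ _, hτ _ _]

theorem consistentEve_outcome : ConsistentEve A σ (A.outcome σ τ s) := fun i hi => by
  rw [outcome_succ, if_pos hi]

theorem consistentAdam_outcome : ConsistentAdam A τ (A.outcome σ τ s) := fun i hi => by
  rw [outcome_succ, if_neg hi]

end Plays

section AdamEscapes

variable {T : Set V} {p : ℕ → V} {k : ℕ}

theorem notMem_attr_of_adam_stays_out (hp : ∀ i, A.E (p i) (p (i + 1))) (hk : p k ∉ Attr A T)
    (hadam : ∀ m ≥ k, (∀ l ∈ Set.Icc k m, p l ∉ Attr A T) → p m ∉ A.VEve →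
      p (m + 1) ∉ Attr A T) :
    ∀ m ≥ k, p m ∉ Attr A T := by
  suffices h : ∀ m ≥ k, ∀ l ∈ Set.Icc k m, p l ∉ Attr A T from
    fun m hm => h m hm m ⟨hm, le_rfl⟩
  intro m hm
  induction m, hm using Nat.le_induction with
  | base => rintro l ⟨h1, h2⟩; rwa [le_antisymm h2 h1]
  | succ m hm ih =>
    rintro l ⟨hkl, hlm⟩
    rcases hlm.lt_or_eq with hlm | rfl
    · exact ih l ⟨hkl, Nat.lt_succ_iff.1 hlm⟩
    by_cases hv : p m ∈ A.VEve
    · exact fun h => ih m ⟨hm, le_rfl⟩ (A.mem_attr_of_mem_VEve hv (hp m) h)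
    · exact hadam m hm ih hv

theorem not_visits_of_notMem_attr (hlt : ∀ l < k, p l ∉ T)
    (hge : ∀ m ≥ k, p m ∉ Attr A T) : ¬Visits p T := by
  rintro ⟨l, hl⟩
  rcases lt_or_ge l k with h | h
  exacts [hlt l h hl, hge l h (A.subset_attr T hl)]

theorem escapeMove_notMem_attr {v : V} (hv : v ∉ A.VEve) (hvT : v ∉ Attr A T) :
    A.escapeMove T v ∉ Attr A T :=
  A.moveTo_spec (A.exists_succ_notMem_attr hv hvT)

noncomputable def escapeStrategy (T : Set V) : Strategy V := fun _ v => A.escapeMove T v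

open Classical in
noncomputable def switchEscapeStrategy (a b : V) : Strategy V :=
  fun h v => A.escapeMove (if b ∈ v :: h then {a} else {b}) v

variable {σ : Strategy V} {s : V}

theorem mem_attr_of_forall_visits (hσ : ValidStrategy A σ)
    (hwin : ∀ p, IsPlay A s p → ConsistentEve A σ p → Visits p T) : s ∈ Attr A T := by
  by_contra hs
  set p := A.outcome σ (A.escapeStrategy T) s
  have hp : IsPlay A s p := A.isPlay_outcome hσ fun _ v => A.edge_moveTo _ v
  have hadam : ConsistentAdam A (A.escapeStrategy T) p := A.consistentAdam_outcome
  refine A.not_visits_of_notMem_attr (k := 0) (by simp) ?_ (hwin p hp A.consistentEve_outcome)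
  refine A.notMem_attr_of_adam_stays_out hp.2 (by rwa [hp.1]) fun m _ hout hv => ?_
  rw [hadam m hv]
  exact A.escapeMove_notMem_attr hv (hout m ⟨Nat.zero_le m, le_rfl⟩)

theorem mem_attr_or_mem_attr_of_forall_visits (hσ : ValidStrategy A σ) {a b : V}
    (ha : ∀ p, IsPlay A s p → ConsistentEve A σ p → Visits p {a})
    (hb : ∀ p, IsPlay A s p → ConsistentEve A σ p → Visits p {b}) :
    a ∈ Attr A {b} ∨ b ∈ Attr A {a} := by
  classical
  by_contra! ⟨hab, hba⟩
  set p := A.outcome σ (A.switchEscapeStrategy a b) s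
  have hp : IsPlay A s p := A.isPlay_outcome hσ fun _ v => A.edge_moveTo _ v
  have hcons : ConsistentEve A σ p := A.consistentEve_outcome
  have hadam : ConsistentAdam A (A.switchEscapeStrategy a b) p := A.consistentAdam_outcome
  have hfirst : ∃ k, p k = a ∨ p k = b := (ha p hp hcons).imp fun _ => Or.inl
  have hbefore : ∀ l < Nat.find hfirst, p l ≠ a ∧ p l ≠ b :=
    fun l hl => not_or.1 (Nat.find_min hfirst hl)
  rcases Nat.find_spec hfirst with hka | hkb
  · refine A.not_visits_of_notMem_attr (fun l hl => (hbefore l hl).2) ?_ (hb p hp hcons)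
    refine A.notMem_attr_of_adam_stays_out hp.2 (by rwa [hka]) fun m hm hout hv => ?_
    have hbm : b ∉ p m :: hist p m := by
      rw [mem_cons_hist]
      rintro ⟨l, hlm, hlb⟩
      rcases lt_or_ge l (Nat.find hfirst) with hl | hl
      exacts [(hbefore l hl).2 hlb, hout l ⟨hl, hlm⟩ (A.subset_attr _ hlb)]
    rw [hadam m hv]
    simp only [switchEscapeStrategy, if_neg hbm]
    exact A.escapeMove_notMem_attr hv (hout m ⟨hm, le_rfl⟩)
  · refine A.not_visits_of_notMem_attr (fun l hl => (hbefore l hl).1) ?_ (ha p hp hcons)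
    refine A.notMem_attr_of_adam_stays_out hp.2 (by rwa [hkb]) fun m hm hout hv => ?_
    rw [hadam m hv]
    simp only [switchEscapeStrategy, if_pos (mem_cons_hist.2 ⟨_, hm, hkb⟩)]
    exact A.escapeMove_notMem_attr hv (hout m ⟨hm, le_rfl⟩)

end AdamEscapes

section EveChases

variable {X P : Set V} {v : V}

theorem exists_least_attr
    (hchain : ∀ x ∈ P, ∀ y ∈ P, Attr A {x} ⊆ Attr A {y} ∨ Attr A {y} ⊆ Attr A {x})
    (hP : P.Nonempty) : ∃ x ∈ P, ∀ y ∈ P, Attr A {x} ⊆ Attr A {y} := by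
  obtain ⟨x, hxP, hmin⟩ :=
    exists_minimalFor_of_wellFoundedLT (· ∈ P) (fun x => Attr A {x}) hP
  exact ⟨x, hxP, fun y hy => (hchain x hxP y hy).elim id (hmin hy)⟩

open Classical in
noncomputable def chaseMove (P : Set V) (v : V) : V :=
  if h : ∃ x ∈ P, ∀ y ∈ P, Attr A {x} ⊆ Attr A {y} then A.attrMove {h.choose} v
  else (A.succ_nonempty v).choose

theorem edge_chaseMove (P : Set V) (v : V) : A.E v (A.chaseMove P v) := by
  unfold chaseMove
  split
  exacts [A.edge_moveTo _ v, (A.succ_nonempty v).choose_spec]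

theorem chaseMove_spec (hv : v ∈ A.VEve)
    (hP : ∃ x ∈ P, ∀ y ∈ P, Attr A {x} ⊆ Attr A {y})
    (hvP : ∀ y ∈ P, v ∈ Attr A {y} ∧ v ≠ y) :
    (∀ y ∈ P, A.chaseMove P v ∈ Attr A {y}) ∧
      A.attrRank {hP.choose} (A.chaseMove P v) < A.attrRank {hP.choose} v := by
  obtain ⟨hxP, hleast⟩ := hP.choose_spec
  obtain ⟨hvx, hne⟩ := hvP _ hxP
  have hmove : A.chaseMove P v ∈ Attr A {hP.choose} ∧
      A.attrRank {hP.choose} (A.chaseMove P v) < A.attrRank {hP.choose} v := by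
    rw [chaseMove, dif_pos hP]
    exact A.moveTo_spec (A.exists_succ_attrRank_lt hvx hne hv)
  exact ⟨fun y hy => hleast y hy hmove.1, hmove.2⟩

noncomputable def chaseStrategy (X : Set V) : Strategy V :=
  fun h v => A.chaseMove {x ∈ X | x ∉ v :: h} v

variable {p : ℕ → V} {s : V}

theorem mem_attr_of_mem_pending
    (hchain : ∀ x ∈ X, ∀ y ∈ X, Attr A {x} ⊆ Attr A {y} ∨ Attr A {y} ⊆ Attr A {x})
    (hs : ∀ x ∈ X, s ∈ Attr A {x}) (hp : IsPlay A s p)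
    (hc : ConsistentEve A (A.chaseStrategy X) p) (m : ℕ) :
    ∀ y ∈ pending X p m, p m ∈ Attr A {y} ∧ p m ≠ y := by
  induction m with
  | zero =>
    rintro y ⟨hyX, hy⟩
    exact ⟨hp.1 ▸ hs y hyX, fun h => hy (h ▸ List.mem_cons_self ..)⟩
  | succ m ih =>
    intro y hy
    refine ⟨?_, fun h => hy.2 (h ▸ List.mem_cons_self ..)⟩
    have hym := pending_antitone X p m.le_succ hy
    by_cases hv : p m ∈ A.VEve
    · have hP := A.exists_least_attr (fun x hx y hy => hchain x hx.1 y hy.1) ⟨y, hym⟩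
      rw [hc m hv]
      exact (A.chaseMove_spec hv hP ih).1 y hym
    · exact (A.attrRank_lt_of_notMem_VEve (ih y hym).1 (ih y hym).2 hv (hp.2 m)).1

theorem visits_of_chaseStrategy
    (hchain : ∀ x ∈ X, ∀ y ∈ X, Attr A {x} ⊆ Attr A {y} ∨ Attr A {y} ⊆ Attr A {x})
    (hs : ∀ x ∈ X, s ∈ Attr A {x}) (hp : IsPlay A s p)
    (hc : ConsistentEve A (A.chaseStrategy X) p) {x : V} (hx : x ∈ X) : Visits p {x} := by
  by_contra hnot
  have hxP : ∀ m, x ∈ pending X p m := fun m =>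
    ⟨hx, fun h => hnot <| (mem_cons_hist.1 h).imp fun _ hk => hk.2⟩
  obtain ⟨M, hM⟩ := WellFoundedLT.antitone_chain_condition (pending_antitone X p)
  have hP := A.exists_least_attr (fun x hx y hy => hchain x hx.1 y hy.1) ⟨x, hxP M⟩
  have hdesc : ∀ m, A.attrRank {hP.choose} (p (M + m + 1)) <
      A.attrRank {hP.choose} (p (M + m)) := by
    intro m
    have hinv := A.mem_attr_of_mem_pending hchain hs hp hc (M + m)
    rw [← hM (M + m) (Nat.le_add_right M m)] at hinv
    obtain ⟨hz, hne⟩ := hinv _ hP.choose_spec.1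
    by_cases hv : p (M + m) ∈ A.VEve
    · rw [hc _ hv]
      change A.attrRank _ (A.chaseMove (pending X p (M + m)) _) < _
      rw [← hM (M + m) (Nat.le_add_right M m)]
      exact (A.chaseMove_spec hv hP hinv).2
    · exact (A.attrRank_lt_of_notMem_VEve hz hne hv (hp.2 _)).2
  exact not_strictAnti_of_wellFoundedLT _ <|
    strictAnti_nat_of_succ_lt (f := fun m => A.attrRank {hP.choose} (p (M + m))) hdesc

end EveChases

end Arena

/-- with only singleton targets `{t 1}, ..., {t n}`, Eve wins iff
the attractors of the targets form a chain under inclusion and the start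
vertex lies in all of them. -/
theorem genReach_singletons_iff (A : Arena V) (s : V) (n : ℕ) (t : Fin n → V) :
    EveWins A s (fun i : Fin n => ({t i} : Set V)) ↔
      (∀ i j : Fin n,
          Attr A ({t i} : Set V) ⊆ Attr A ({t j} : Set V) ∨
          Attr A ({t j} : Set V) ⊆ Attr A ({t i} : Set V)) ∧
      (∀ i : Fin n, s ∈ Attr A ({t i} : Set V)) := by
  constructor
  · rintro ⟨σ, hσ, hwin⟩
    have hvis (i : Fin n) : ∀ p, IsPlay A s p → ConsistentEve A σ p → Visits p {t i} :=
      fun p hp hc => hwin p hp hc i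
    refine ⟨fun i j => ?_, fun i => A.mem_attr_of_forall_visits hσ (hvis i)⟩
    rcases A.mem_attr_or_mem_attr_of_forall_visits hσ (hvis i) (hvis j) with h | h
    · exact Or.inl (A.attr_subset_attr (Set.singleton_subset_iff.2 h))
    · exact Or.inr (A.attr_subset_attr (Set.singleton_subset_iff.2 h))
  · rintro ⟨hchain, hs⟩
    refine ⟨A.chaseStrategy (Set.range t), fun _ v => A.edge_chaseMove _ v,
      fun p hp hc i => A.visits_of_chaseStrategy ?_ ?_ hp hc ⟨i, rfl⟩⟩
    · rintro _ ⟨i, rfl⟩ _ ⟨j, rfl⟩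
      exact hchain i j
    · rintro _ ⟨i, rfl⟩
      exact hs i
end

section
/- Let H = (V_H, E_H) be a finite directed graph with designated vertices s, t ∈ V_H, and let n = |V_H|. Construct the directed graph with vertex set (V_H × {1, ..., n+1}) ∪ {⊤, ⊥} and edges: (u, i) → (v, i+1) whenever (u, v) ∈ E_H and 1 ≤ i ≤ n; (t, i) → ⊤ for every i; (v, i) → ⊥ for every v ∈ V_H with v ≠ t and every i; and self-loops on ⊤ and on ⊥. Then t is reachable from s in H if and only if there exists an infinite path from (s, 1) in the constructed graph that never visits ⊥. -/
/-!
A shortest walk from `s` to `t` in `H` visits no vertex twice, so it has fewer than `n` edges and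
fits into the `n + 1` layers, after which the path rests at `⊤`. Conversely, along a path that
avoids `⊥` the layer index grows by one at each step while it stays in the layers, and it cannot
stay there forever; the only exit other than `⊥` is the edge `(t, i) → ⊤`, and the layered prefix
projects to a walk from `s` to `t` in `H`.
-/

/-- The graph constructed from `(VH, EH)` and target `t`: vertices are pairs
`(u, a)` with `a : Fin (n+1)` representing the layer `a + 1 ∈ {1, ..., n+1}`,
together with `⊤` (`Sum.inr true`) and `⊥` (`Sum.inr false`). -/
def layerGraph {VH : Type*} (EH : VH → VH → Prop) (t : VH) (n : ℕ) :
    (VH × Fin (n + 1)) ⊕ Bool → (VH × Fin (n + 1)) ⊕ Bool → Prop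
  | .inl (u, a), .inl (v, b) => EH u v ∧ (b : ℕ) = (a : ℕ) + 1
  | .inl (u, _), .inr c => (c = true ∧ u = t) ∨ (c = false ∧ u ≠ t)
  | .inr c, .inr c' => c = c'
  | .inr _, .inl _ => False

namespace Relation

variable {α : Type*} {r : α → α → Prop}

def IsWalk (r : α → α → Prop) (f : ℕ → α) (k : ℕ) : Prop :=
  ∀ i < k, r (f i) (f (i + 1))

theorem ReflTransGen.exists_isWalk {a b : α} (h : ReflTransGen r a b) :
    ∃ k f, IsWalk r f k ∧ f 0 = a ∧ f k = b := by
  induction h with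
  | refl => exact ⟨0, fun _ => a, fun _ hi => absurd hi (Nat.not_lt_zero _), rfl, rfl⟩
  | @tail b c _ hbc ih =>
    obtain ⟨k, f, hf, hf0, hfk⟩ := ih
    refine ⟨k + 1, fun i => if i ≤ k then f i else c, fun i hi => ?_, by simpa using hf0, by simp⟩
    rcases Nat.lt_or_eq_of_le (Nat.le_of_lt_succ hi) with hik | rfl
    · simpa [hik.le, Nat.succ_le_of_lt hik] using hf i hik
    · simpa [hfk] using hbc

theorem IsWalk.exists_cut {f : ℕ → α} {k i j : ℕ} (hf : IsWalk r f k) (hij : i ≤ j) (hjk : j ≤ k)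
    (hfij : f i = f j) : ∃ g, IsWalk r g (k - (j - i)) ∧ g 0 = f 0 ∧ g (k - (j - i)) = f k := by
  refine ⟨fun m => if m ≤ i then f m else f (m + (j - i)), fun m hm => ?_, by simp, ?_⟩
  · rcases lt_trichotomy m i with hmi | rfl | hmi
    · simpa [hmi.le, Nat.succ_le_of_lt hmi] using hf m (by omega)
    · simpa [hfij, show m + 1 + (j - m) = j + 1 by omega] using hf j (by omega)
    · simpa [show ¬m ≤ i by omega, show ¬m + 1 ≤ i by omega, show m + 1 + (j - i) = m + (j - i) + 1
        by omega] using hf (m + (j - i)) (by omega)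
  · by_cases h : k - (j - i) ≤ i
    · dsimp only
      rw [if_pos h, show k - (j - i) = i by omega, hfij, show j = k by omega]
    · simp [h, show k - (j - i) + (j - i) = k by omega]

theorem ReflTransGen.exists_isWalk_lt_card [Fintype α] {a b : α} (h : ReflTransGen r a b) :
    ∃ k < Fintype.card α, ∃ f, IsWalk r f k ∧ f 0 = a ∧ f k = b := by
  obtain ⟨k, hk⟩ := h.exists_isWalk
  induction k using Nat.strong_induction_on with
  | _ k ih =>
    obtain ⟨f, hf, hf0, hfk⟩ := hk
    by_cases hcard : k < Fintype.card α
    · exact ⟨k, hcard, f, hf, hf0, hfk⟩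
    obtain ⟨x, y, hxy, hfxy⟩ := Fintype.exists_ne_map_eq_of_card_lt (fun x : Fin (k + 1) => f x)
      (by simp; omega)
    have hxy' : (x : ℕ) ≠ y := Fin.val_ne_of_ne hxy
    wlog hlt : (x : ℕ) < y generalizing x y
    · exact this y x hxy.symm hfxy.symm hxy'.symm (by omega)
    obtain ⟨g, hg, hg0, hgk⟩ := hf.exists_cut hlt.le (Nat.le_of_lt_succ y.isLt) hfxy
    exact ih _ (by omega) ⟨g, hg, hg0.trans hf0, hgk.trans hfk⟩

end Relation

open Relation

theorem exists_layerGraph_path_of_isWalk {VH : Type*} {EH : VH → VH → Prop} {f : ℕ → VH}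
    {k n : ℕ} (hf : IsWalk EH f k) (hkn : k ≤ n) :
    ∃ p : ℕ → (VH × Fin (n + 1)) ⊕ Bool,
      p 0 = Sum.inl (f 0, 0) ∧ (∀ i, layerGraph EH (f k) n (p i) (p (i + 1))) ∧
        ∀ i, p i ≠ Sum.inr false := by
  refine ⟨fun i => if h : i ≤ k then .inl (f i, ⟨i, by omega⟩) else .inr true, by simp,
    fun i => ?_, fun i => by by_cases hik : i ≤ k <;> simp [hik]⟩
  rcases lt_trichotomy i k with hik | rfl | hik
  · simpa [hik.le, Nat.succ_le_of_lt hik, layerGraph] using hf i hik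
  · simp [layerGraph]
  · simp [show ¬i ≤ k by omega, show ¬i + 1 ≤ k by omega, layerGraph]

theorem reflTransGen_or_mem_layer_of_layerGraph_path {VH : Type*} {EH : VH → VH → Prop} {s t : VH}
    {n : ℕ} {p : ℕ → (VH × Fin (n + 1)) ⊕ Bool} (h0 : p 0 = Sum.inl (s, 0))
    (hstep : ∀ i, layerGraph EH t n (p i) (p (i + 1))) (hbot : ∀ i, p i ≠ Sum.inr false)
    (i : ℕ) :
    ReflTransGen EH s t ∨
      ∃ u a, p i = Sum.inl (u, a) ∧ (a : ℕ) = i ∧ ReflTransGen EH s u := by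
  induction i with
  | zero => exact Or.inr ⟨s, 0, h0, rfl, .refl⟩
  | succ i ih =>
    obtain hst | ⟨u, a, hpi, rfl, hsu⟩ := ih
    · exact Or.inl hst
    have hedge := hstep a
    rw [hpi] at hedge
    rcases hnext : p (a + 1) with ⟨v, b⟩ | c <;> rw [hnext] at hedge
    · exact Or.inr ⟨v, b, rfl, hedge.2, hsu.tail hedge.1⟩
    · rcases hedge with ⟨-, rfl⟩ | ⟨rfl, -⟩
      · exact Or.inl hsu
      · exact absurd hnext (hbot _)

theorem reflTransGen_of_layerGraph_path {VH : Type*} {EH : VH → VH → Prop} {s t : VH} {n : ℕ}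
    {p : ℕ → (VH × Fin (n + 1)) ⊕ Bool} (h0 : p 0 = Sum.inl (s, 0))
    (hstep : ∀ i, layerGraph EH t n (p i) (p (i + 1))) (hbot : ∀ i, p i ≠ Sum.inr false) :
    ReflTransGen EH s t := by
  obtain hst | ⟨_, a, -, ha, -⟩ :=
    reflTransGen_or_mem_layer_of_layerGraph_path h0 hstep hbot (n + 1)
  · exact hst
  · exact absurd ha (by omega)

/-- `t` is reachable from `s` in `H` iff in the constructed graph
there is an infinite path from `(s, 1)` that never visits `⊥`. -/
theorem reachable_iff_path_avoids_bot {VH : Type*} [Fintype VH]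
    (EH : VH → VH → Prop) (s t : VH) :
    Relation.ReflTransGen EH s t ↔
      ∃ p : ℕ → (VH × Fin (Fintype.card VH + 1)) ⊕ Bool,
        p 0 = Sum.inl (s, 0) ∧
        (∀ i, layerGraph EH t (Fintype.card VH) (p i) (p (i + 1))) ∧
        ∀ i, p i ≠ Sum.inr false := by
  constructor
  · intro h
    obtain ⟨k, hk, f, hf, rfl, rfl⟩ := h.exists_isWalk_lt_card
    exact exists_layerGraph_path_of_isWalk hf hk.le
  · rintro ⟨p, h0, hstep, hbot⟩
    exact reflTransGen_of_layerGraph_path h0 hstep hbot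
end

section
/- Let G = (V, E) be a finite directed graph in which every vertex has at least one outgoing edge, let s ∈ V, and let T ⊆ V be a set of target vertices. Then the maximum, over all infinite paths π from s, of the number of vertices of T visited by π equals the maximum, over all directed paths C_0 C_1 ... C_r in the condensation of G such that s ∈ C_0, of the sum Σ_{j=0}^{r} |T ∩ C_j|. -/
/-- A strongly connected component of the directed graph `E`: a maximal
(nonempty) set of vertices each reachable from every other. -/
def IsSCC {V : Type*} (E : V → V → Prop) (C : Set V) : Prop :=
  C.Nonempty ∧ (∀ u ∈ C, ∀ v ∈ C, Relation.ReflTransGen E u v) ∧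
    ∀ D : Set V, C ⊆ D → (∀ u ∈ D, ∀ v ∈ D, Relation.ReflTransGen E u v) → D = C

/-- An edge of the condensation of `E`, between two (distinct) SCCs. -/
def CondEdge {V : Type*} (E : V → V → Prop) (C C' : Set V) : Prop :=
  C ≠ C' ∧ ∃ u ∈ C, ∃ v ∈ C', E u v

/-!
An infinite path can never return to an SCC it has left, so the SCCs it meets, listed in order of
first visit, form a path in the condensation whose SCCs contain every target the path visits.
Conversely, along a condensation path `C 0, …, C r` one can walk through every vertex of `C 0`,
cross the condensation edge into `C 1`, tour all of it, and so on, and then continue forever; as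
the walk never re-enters an SCC it has left, it collects `Σ_j |T ∩ C j|` distinct targets. Both
inequalities are proved by induction, peeling off the first SCC.
-/

open Relation Set

lemma Nat.forall_or_exists_le_and_not_succ {P : ℕ → Prop} (h0 : P 0) :
    (∀ i, P i) ∨ ∃ m, (∀ i ≤ m, P i) ∧ ¬ P (m + 1) := by
  by_contra! h
  obtain ⟨⟨i, hi⟩, hstep⟩ := h
  have hupto : ∀ m, ∀ i ≤ m, P i := by
    intro m
    induction m with
    | zero => intro i hi; rwa [Nat.le_zero.mp hi]
    | succ m ih =>
      intro i hi
      rcases Nat.le_succ_iff.mp hi with hi | rfl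
      exacts [ih i hi, hstep m ih]
  exact hi (hupto i i le_rfl)

section

variable {V : Type*} {E : V → V → Prop}

def sccOf (E : V → V → Prop) (v : V) : Set V :=
  {u | ReflTransGen E u v ∧ ReflTransGen E v u}

lemma mem_sccOf_self (v : V) : v ∈ sccOf E v := ⟨.refl, .refl⟩

lemma isSCC_sccOf (v : V) : IsSCC E (sccOf E v) := by
  refine ⟨⟨v, mem_sccOf_self v⟩, fun _ hu _ hw => hu.1.trans hw.2, fun D hsub hD => ?_⟩
  refine Subset.antisymm (fun u hu => ?_) hsub
  exact ⟨hD u hu v (hsub (mem_sccOf_self v)), hD v (hsub (mem_sccOf_self v)) u hu⟩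

namespace IsSCC

variable {C C' : Set V}

lemma eq_sccOf (hC : IsSCC E C) {v : V} (hv : v ∈ C) : C = sccOf E v :=
  (hC.2.2 (sccOf E v) (fun u hu => ⟨hC.2.1 u hu v hv, hC.2.1 v hv u hu⟩)
    (fun _ hu _ hw => hu.1.trans hw.2)).symm

lemma eq_of_mem (hC : IsSCC E C) (hC' : IsSCC E C') {v : V} (hv : v ∈ C) (hv' : v ∈ C') :
    C = C' :=
  (hC.eq_sccOf hv).trans (hC'.eq_sccOf hv').symm

lemma mem_of_reflTransGen (hC : IsSCC E C) {u v : V} (hu : u ∈ C) (huv : ReflTransGen E u v)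
    (hvu : ReflTransGen E v u) : v ∈ C := by
  rw [hC.eq_sccOf hu]
  exact ⟨hvu, huv⟩

end IsSCC

section InfinitePath

variable {p q : ℕ → V}

lemma reflTransGen_of_isPath (hp : ∀ i, E (p i) (p (i + 1))) (i : ℕ) :
    ReflTransGen E (p 0) (p i) :=
  (reflTransGen_of_succ_of_le (fun a b => E (p a) (p b)) (fun j _ => hp j) i.zero_le).lift p
    fun _ _ h => h

lemma exists_path_from (hE : ∀ v, ∃ w, E v w) (s : V) :
    ∃ p : ℕ → V, p 0 = s ∧ ∀ i, E (p i) (p (i + 1)) := by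
  choose f hf using hE
  exact ⟨fun i => f^[i] s, rfl, fun i => by
    simpa only [Function.iterate_succ_apply'] using hf (f^[i] s)⟩

lemma exists_path_of_reflTransGen {s : V} (hq : ∀ i, E (q i) (q (i + 1)))
    (hs : ReflTransGen E s (q 0)) :
    ∃ p : ℕ → V, p 0 = s ∧ (∀ i, E (p i) (p (i + 1))) ∧ range q ⊆ range p := by
  induction hs using ReflTransGen.head_induction_on with
  | refl => exact ⟨q, rfl, hq, le_rfl⟩
  | @head a b hab _ ih =>
    obtain ⟨p, hp0, hp, hqp⟩ := ih
    refine ⟨fun | 0 => a | i + 1 => p i, rfl,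
      fun | 0 => by simpa only [hp0] using hab | i + 1 => hp i, ?_⟩
    rintro _ ⟨i, rfl⟩
    obtain ⟨j, hj⟩ := hqp ⟨i, rfl⟩
    exact ⟨j + 1, hj⟩

lemma exists_path_covering_of_finite {S : Set V} (hS : S.Finite)
    (hconn : ∀ x ∈ S, ∀ y ∈ S, ReflTransGen E x y) (hq : ∀ i, E (q i) (q (i + 1)))
    (hSq : ∀ x ∈ S, ReflTransGen E x (q 0)) {s : V} (hsS : ∀ x ∈ S, ReflTransGen E s x)
    (hsq : ReflTransGen E s (q 0)) :
    ∃ p : ℕ → V, p 0 = s ∧ (∀ i, E (p i) (p (i + 1))) ∧ S ∪ range q ⊆ range p := by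
  induction S, hS using Finite.induction_on generalizing s with
  | empty => simpa using exists_path_of_reflTransGen hq hsq
  | @insert x S _ _ ih =>
    have hxS : ∀ y ∈ S, ReflTransGen E x y := fun y hy => hconn x (.inl rfl) y (.inr hy)
    obtain ⟨p', hp'0, hp', hcov⟩ := ih (fun y hy z hz => hconn y (.inr hy) z (.inr hz))
      (fun y hy => hSq y (.inr hy)) hxS (hSq x (.inl rfl))
    obtain ⟨p, hp0, hp, hp'p⟩ := exists_path_of_reflTransGen hp' (hp'0 ▸ hsS x (.inl rfl))
    refine ⟨p, hp0, hp, ?_⟩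
    rintro y ((rfl | hy) | hy)
    · exact hp'p ⟨0, hp'0⟩
    · exact hp'p (hcov (.inl hy))
    · exact hp'p (hcov (.inr hy))

end InfinitePath

section Condensation

variable [Finite V] (T : Set V)

/-- Induction on the number of vertices reachable from `p 0`: after its first exit from the SCC of
`p 0`, the path can no longer reach `p 0`. -/
lemma exists_condensationPath_ge {p : ℕ → V} (hp : ∀ i, E (p i) (p (i + 1))) :
    ∃ (r : ℕ) (C : ℕ → Set V), (∀ j ≤ r, IsSCC E (C j)) ∧ p 0 ∈ C 0 ∧
      (∀ j < r, CondEdge E (C j) (C (j + 1))) ∧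
      (T ∩ range p).ncard ≤ ∑ j ∈ Finset.range (r + 1), (T ∩ C j).ncard := by
  induction hn : {v | ReflTransGen E (p 0) v}.ncard using Nat.strong_induction_on generalizing p
    with | _ n ih => ?_
  rcases Nat.forall_or_exists_le_and_not_succ (P := fun i => p i ∈ sccOf E (p 0))
    (mem_sccOf_self _) with hstay | ⟨m, hbefore, hexit⟩
  · refine ⟨0, fun _ => sccOf E (p 0), fun _ _ => isSCC_sccOf _, mem_sccOf_self _,
      fun _ h => absurd h (Nat.not_lt_zero _), ?_⟩
    rw [Finset.sum_range_one]
    exact ncard_le_ncard (inter_subset_inter_right T (range_subset_iff.mpr hstay))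
  set q : ℕ → V := fun i => p (m + 1 + i) with hq_def
  have hq : ∀ i, E (q i) (q (i + 1)) := fun i => hp (m + 1 + i)
  have hreach : ReflTransGen E (p 0) (q 0) := reflTransGen_of_isPath hp (m + 1)
  have hsmaller : {v | ReflTransGen E (q 0) v}.ncard < n := by
    refine hn ▸ ncard_lt_ncard ⟨fun v hv => hreach.trans hv, fun hsub => ?_⟩
    exact hexit ⟨hsub .refl, hreach⟩
  obtain ⟨r, D, hD, hq0, hDE, hcount⟩ := ih _ hsmaller hq rfl
  refine ⟨r + 1, fun | 0 => sccOf E (p 0) | j + 1 => D j, ?_, mem_sccOf_self _, ?_, ?_⟩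
  · rintro (_ | j) hj
    exacts [isSCC_sccOf _, hD j (by omega)]
  · rintro (_ | j) hj
    · refine ⟨fun heq => hexit ?_, p m, hbefore m le_rfl, q 0, hq0, hp m⟩
      rw [show sccOf E (p 0) = D 0 from heq]
      exact hq0
    · exact hDE j (by omega)
  · have hsplit : T ∩ range p ⊆ (T ∩ range q) ∪ (T ∩ sccOf E (p 0)) := by
      rintro _ ⟨hT, i, rfl⟩
      rcases lt_or_ge m i with hi | hi
      · exact .inl ⟨hT, i - (m + 1), congrArg p (by omega)⟩
      · exact .inr ⟨hT, hbefore i hi⟩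
    calc (T ∩ range p).ncard
        ≤ (T ∩ range q).ncard + (T ∩ sccOf E (p 0)).ncard :=
          (ncard_le_ncard hsplit).trans (ncard_union_le _ _)
      _ ≤ _ := by
          rw [Finset.sum_range_succ']
          exact Nat.add_le_add_right hcount _

lemma IsSCC.exists_path_covering {C : Set V} (hC : IsSCC E C) {q : ℕ → V}
    (hq : ∀ i, E (q i) (q (i + 1))) {u : V} (hu : u ∈ C) (huq : ReflTransGen E u (q 0))
    {s : V} (hs : s ∈ C) :
    ∃ p : ℕ → V, p 0 = s ∧ (∀ i, E (p i) (p (i + 1))) ∧ C ∪ range q ⊆ range p :=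
  exists_path_covering_of_finite (toFinite C) hC.2.1 hq (fun x hx => (hC.2.1 x hx u hu).trans huq)
    (hC.2.1 s hs) ((hC.2.1 s hs u hu).trans huq)

lemma exists_path_ge (hE : ∀ v, ∃ w, E v w) (r : ℕ) {C : ℕ → Set V} {s : V}
    (hC : ∀ j ≤ r, IsSCC E (C j)) (hs : s ∈ C 0)
    (hCE : ∀ j < r, CondEdge E (C j) (C (j + 1))) :
    ∃ p : ℕ → V, p 0 = s ∧ (∀ i, E (p i) (p (i + 1))) ∧
      ∑ j ∈ Finset.range (r + 1), (T ∩ C j).ncard ≤ (T ∩ range p).ncard := by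
  induction r generalizing C s with
  | zero =>
    obtain ⟨q, hq0, hq⟩ := exists_path_from hE s
    obtain ⟨p, hp0, hp, hcov⟩ := (hC 0 le_rfl).exists_path_covering hq hs (hq0 ▸ .refl) hs
    refine ⟨p, hp0, hp, ?_⟩
    rw [Finset.sum_range_one]
    exact ncard_le_ncard (inter_subset_inter_right T (subset_union_left.trans hcov))
  | succ r ih =>
    have hC0 := hC 0 (Nat.zero_le _)
    obtain ⟨hne, u, hu, v, hv, huv⟩ := hCE 0 (Nat.zero_lt_succ r)
    obtain ⟨q, hq0, hq, hcount⟩ :=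
      ih (C := fun j => C (j + 1)) (fun j hj => hC (j + 1) (by omega)) hv
        (fun j hj => hCE (j + 1) (by omega))
    obtain ⟨p, hp0, hp, hcov⟩ := hC0.exists_path_covering hq hu (hq0 ▸ .single huv) hs
    -- `C 0` cannot be re-entered after the edge `u → v`, or `v` would lie in `C 0`.
    have hdisj : Disjoint (range q) (C 0) := by
      refine disjoint_left.mpr ?_
      rintro _ ⟨i, rfl⟩ hi
      have hvu : ReflTransGen E v u :=
        hq0 ▸ (reflTransGen_of_isPath hq i).trans (hC0.2.1 _ hi u hu)
      exact hne (hC0.eq_of_mem (hC 1 (by omega)) (hC0.mem_of_reflTransGen hu (.single huv) hvu) hv)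
    refine ⟨p, hp0, hp, ?_⟩
    calc ∑ j ∈ Finset.range (r + 2), (T ∩ C j).ncard
        ≤ (T ∩ range q).ncard + (T ∩ C 0).ncard := by
          rw [Finset.sum_range_succ']
          exact Nat.add_le_add_right hcount _
      _ = ((T ∩ range q) ∪ (T ∩ C 0)).ncard :=
          (ncard_union_eq (hdisj.mono inter_subset_right inter_subset_right)).symm
      _ ≤ (T ∩ range p).ncard := by
          rw [← inter_union_distrib_left]
          exact ncard_le_ncard (inter_subset_inter_right T (union_comm _ _ ▸ hcov))

end Condensation

end

/-- the maximum number of target vertices of `T` visited by an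
infinite path from `s` equals the maximum, over directed paths
`C 0, C 1, ..., C r` in the condensation starting at the SCC containing `s`,
of `Σ_j |T ∩ C j|`. -/
theorem max_targets_eq_max_condensation_path {V : Type*} [Fintype V]
    (E : V → V → Prop) (hE : ∀ v, ∃ w, E v w) (s : V) (T : Set V) :
    sSup {c : ℕ | ∃ p : ℕ → V, p 0 = s ∧ (∀ i, E (p i) (p (i + 1))) ∧
        c = (T ∩ {v | ∃ i, p i = v}).ncard} =
    sSup {c : ℕ | ∃ (r : ℕ) (C : ℕ → Set V),
        (∀ j ≤ r, IsSCC E (C j)) ∧ s ∈ C 0 ∧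
        (∀ j < r, CondEdge E (C j) (C (j + 1))) ∧
        c = ∑ j ∈ Finset.range (r + 1), (T ∩ C j).ncard} := by
  apply csSup_eq_csSup_of_forall_exists_le
  · rintro _ ⟨p, rfl, hp, rfl⟩
    obtain ⟨r, C, hC, hs, hCE, hle⟩ := exists_condensationPath_ge T hp
    exact ⟨_, ⟨r, C, hC, hs, hCE, rfl⟩, hle⟩
  · rintro _ ⟨r, C, hC, hs, hCE, rfl⟩
    obtain ⟨p, hp0, hp, hle⟩ := exists_path_ge T hE r hC hs hCE
    exact ⟨_, ⟨p, hp0, hp, rfl⟩, hle⟩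
end

section
/- Let c_1, ..., c_m be clauses (sets of literals) over Boolean variables x_1, ..., x_n. Construct the directed graph with vertex set {1, ..., n} ∪ {x_i, ¬x_i : 1 ≤ i ≤ n} ∪ {⊥} and edges i → x_i and i → ¬x_i for all i, x_i → i+1 and ¬x_i → i+1 for all i < n, x_n → ⊥ and ¬x_n → ⊥, and a self-loop on ⊥; view each clause c_j as the set of its literal vertices. Then for every infinite path from vertex 1 there is a Boolean assignment to x_1, ..., x_n that satisfies exactly those clauses c_j whose vertex sets the path visits, and conversely for every Boolean assignment there is an infinite path from vertex 1 visiting exactly the vertex sets of the satisfied clauses. Consequently, for every k there is an infinite path from 1 visiting at least (respectively, at most) k of the sets c_1, ..., c_m if and only if some assignment satisfies at least (respectively, at most) k of the clauses. -/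
/-- The one-player clause graph over variables `x_0, ..., x_{n-1}` (0-indexed):
vertices are the variable-choice vertices `i` (`Sum.inl (Sum.inl i)`),
the literal vertices (`Sum.inl (Sum.inr (i, b))`, where `b = true` stands for
the positive literal `x i` and `b = false` for `¬ x i`), and the sink `⊥`
(`Sum.inr ()`). -/
def clauseGraph (n : ℕ) :
    (Fin n ⊕ (Fin n × Bool)) ⊕ Unit → (Fin n ⊕ (Fin n × Bool)) ⊕ Unit → Prop
  | .inl (.inl i), .inl (.inr l) => l.1 = i
  | .inl (.inr l), .inl (.inl i') => (i' : ℕ) = (l.1 : ℕ) + 1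
  | .inl (.inr l), .inr _ => (l.1 : ℕ) + 1 = n
  | .inr _, .inr _ => True
  | _, _ => False

/-- The assignment `α` satisfies the clause `c` (a finite set of literals). -/
def SatClause {n : ℕ} (α : Fin n → Bool) (c : Finset (Fin n × Bool)) : Prop :=
  ∃ l ∈ c, α l.1 = l.2

/-- The path `p` in the clause graph visits (the vertex set of) the clause `c`. -/
def VisitsClause {n : ℕ} (p : ℕ → (Fin n ⊕ (Fin n × Bool)) ⊕ Unit)
    (c : Finset (Fin n × Bool)) : Prop :=
  ∃ i, ∃ l ∈ c, p i = Sum.inl (Sum.inr l)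

/-- An infinite path in the clause graph starting at the first
variable-choice vertex. -/
def IsClausePath {n : ℕ} (hn : 0 < n)
    (p : ℕ → (Fin n ⊕ (Fin n × Bool)) ⊕ Unit) : Prop :=
  p 0 = Sum.inl (Sum.inl ⟨0, hn⟩) ∧ ∀ i, clauseGraph n (p i) (p (i + 1))

/-!
A path from the first choice vertex is forced everywhere except at the choice vertices, where
it picks a literal; so paths are exactly the iterates of the successor map `clauseStep α`, one
for each assignment `α`, and the literal vertices such a path visits are precisely the literals
made true by `α`. The choice made at variable `i` is read off at time `2 i + 1`, because every
edge below the sink raises `vertexRank` by one.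
-/

abbrev ClauseVertex (n : ℕ) := (Fin n ⊕ (Fin n × Bool)) ⊕ Unit

namespace ClauseVertex

variable {n : ℕ}

def clauseStep (α : Fin n → Bool) : ClauseVertex n → ClauseVertex n
  | .inl (.inl i) => .inl (.inr (i, α i))
  | .inl (.inr l) => if h : (l.1 : ℕ) + 1 < n then .inl (.inl ⟨l.1 + 1, h⟩) else .inr ()
  | .inr u => .inr u

def vertexRank : ClauseVertex n → ℕ
  | .inl (.inl i) => 2 * i
  | .inl (.inr l) => 2 * l.1 + 1
  | .inr _ => 2 * n

def assignmentPath (hn : 0 < n) (α : Fin n → Bool) (k : ℕ) : ClauseVertex n :=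
  (clauseStep α)^[k] (.inl (.inl ⟨0, hn⟩))

theorem assignmentPath_succ (hn : 0 < n) (α : Fin n → Bool) (k : ℕ) :
    assignmentPath hn α (k + 1) = clauseStep α (assignmentPath hn α k) :=
  Function.iterate_succ_apply' _ _ _

def pathAssignment (p : ℕ → ClauseVertex n) (i : Fin n) : Bool :=
  match p (2 * i + 1) with
  | .inl (.inr l) => l.2
  | _ => false

theorem clauseGraph_clauseStep (α : Fin n → Bool) (v : ClauseVertex n) :
    clauseGraph n v (clauseStep α v) := by
  rcases v with (i | l) | u
  · rfl
  · simp only [clauseStep]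
    split_ifs with h
    · rfl
    · show (l.1 : ℕ) + 1 = n
      omega
  · trivial

theorem eq_clauseStep_of_clauseGraph (α : Fin n → Bool) {v w : ClauseVertex n}
    (h : clauseGraph n v w) (hv : ∀ i, v = .inl (.inl i) → w = .inl (.inr (i, α i))) :
    w = clauseStep α v := by
  rcases v with (i | l) | u
  · exact hv i rfl
  · rcases w with (i' | l') | u'
    · have hi' : (i' : ℕ) = l.1 + 1 := h
      simp only [clauseStep, dif_pos (show (l.1 : ℕ) + 1 < n by omega)]
      exact congrArg _ (congrArg _ (Fin.ext hi'))
    · exact h.elim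
    · have hl : (l.1 : ℕ) + 1 = n := h
      simp [clauseStep, hl]
  · rcases w with (_ | _) | _
    · exact h.elim
    · exact h.elim
    · rfl

theorem eq_of_clauseStep_eq_literal {α : Fin n → Bool} {v : ClauseVertex n} {l : Fin n × Bool}
    (h : clauseStep α v = .inl (.inr l)) : α l.1 = l.2 := by
  rcases v with (i | l') | u
  · cases h
    rfl
  · simp only [clauseStep] at h
    split_ifs at h
    cases h
  · cases h

theorem vertexRank_of_clauseGraph {v w : ClauseVertex n} (h : clauseGraph n v w) :
    vertexRank w = min (vertexRank v + 1) (2 * n) := by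
  rcases v with (i | l) | u <;> rcases w with (i' | l') | u' <;>
    simp only [clauseGraph] at h <;> simp only [vertexRank] <;> omega

theorem eq_choice_of_vertexRank_eq {v : ClauseVertex n} {i : Fin n}
    (h : vertexRank v = 2 * i) : v = .inl (.inl i) := by
  rcases v with (j | l) | u <;> simp only [vertexRank] at h
  · exact congrArg _ (congrArg _ (Fin.ext (by omega)))
  · omega
  · omega

theorem _root_.IsClausePath.vertexRank_eq {hn : 0 < n} {p : ℕ → ClauseVertex n}
    (hp : IsClausePath hn p) (k : ℕ) : vertexRank (p k) = min k (2 * n) := by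
  induction k with
  | zero => simp [hp.1, vertexRank]
  | succ k ih =>
    rw [vertexRank_of_clauseGraph (hp.2 k), ih]
    omega

theorem _root_.IsClausePath.succ_eq_clauseStep {hn : 0 < n} {p : ℕ → ClauseVertex n}
    (hp : IsClausePath hn p) (k : ℕ) : p (k + 1) = clauseStep (pathAssignment p) (p k) := by
  refine eq_clauseStep_of_clauseGraph _ (hp.2 k) fun i hi => ?_
  have hk : k = 2 * i := by
    have := hp.vertexRank_eq k
    rw [hi, vertexRank] at this
    omega
  have hedge := hp.2 k
  rw [hi] at hedge
  rcases hw : p (k + 1) with (_ | l) | _ <;> rw [hw] at hedge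
  · exact hedge.elim
  · have hl : pathAssignment p i = l.2 := by
      simp only [pathAssignment, ← hk, hw]
    rw [hl]
    exact congrArg _ (congrArg _ (Prod.ext hedge rfl))
  · exact hedge.elim

theorem _root_.IsClausePath.exists_eq_assignmentPath {hn : 0 < n} {p : ℕ → ClauseVertex n}
    (hp : IsClausePath hn p) : ∃ α, p = assignmentPath hn α := by
  refine ⟨pathAssignment p, funext fun k => ?_⟩
  induction k with
  | zero => exact hp.1
  | succ k ih => rw [hp.succ_eq_clauseStep, ih, assignmentPath_succ]

theorem isClausePath_assignmentPath (hn : 0 < n) (α : Fin n → Bool) :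
    IsClausePath hn (assignmentPath hn α) :=
  ⟨rfl, fun k => by
    rw [assignmentPath_succ]
    exact clauseGraph_clauseStep α _⟩

theorem assignmentPath_two_mul (hn : 0 < n) (α : Fin n → Bool) (i : Fin n) :
    assignmentPath hn α (2 * i) = .inl (.inl i) := by
  apply eq_choice_of_vertexRank_eq
  rw [(isClausePath_assignmentPath hn α).vertexRank_eq]
  omega

theorem visitsClause_assignmentPath_iff (hn : 0 < n) (α : Fin n → Bool)
    (c : Finset (Fin n × Bool)) : VisitsClause (assignmentPath hn α) c ↔ SatClause α c := by
  constructor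
  · rintro ⟨k, l, hl, hk⟩
    cases k with
    | zero => cases hk
    | succ k =>
      rw [assignmentPath_succ] at hk
      exact ⟨l, hl, eq_of_clauseStep_eq_literal hk⟩
  · rintro ⟨l, hl, hα⟩
    refine ⟨2 * l.1 + 1, l, hl, ?_⟩
    rw [assignmentPath_succ, assignmentPath_two_mul]
    simp [clauseStep, hα]

end ClauseVertex

open ClauseVertex

theorem exists_setOf_iff_exists_setOf {P A ι : Type*} {IsPath : P → Prop}
    {Vis : P → ι → Prop} {Sat : A → ι → Prop}
    (h₁ : ∀ p, IsPath p → ∃ a, ∀ j, Sat a j ↔ Vis p j)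
    (h₂ : ∀ a, ∃ p, IsPath p ∧ ∀ j, Sat a j ↔ Vis p j) (S : Set ι → Prop) :
    (∃ p, IsPath p ∧ S {j | Vis p j}) ↔ ∃ a, S {j | Sat a j} := by
  constructor
  · rintro ⟨p, hp, hS⟩
    obtain ⟨a, ha⟩ := h₁ p hp
    exact ⟨a, by simpa only [ha] using hS⟩
  · rintro ⟨a, hS⟩
    obtain ⟨p, hp, ha⟩ := h₂ a
    exact ⟨p, hp, by simpa only [ha] using hS⟩

/-- infinite paths from vertex `1` in the clause graph correspond
to Boolean assignments, matching the satisfied clauses with the visited clause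
vertex sets; consequently, for every `k`, a path visiting at least
(resp. at most) `k` of the clause sets exists iff an assignment satisfying
at least (resp. at most) `k` of the clauses exists. -/
theorem clause_graph_paths_vs_assignments (n m : ℕ) (hn : 0 < n)
    (c : Fin m → Finset (Fin n × Bool)) :
    (∀ p, IsClausePath hn p →
      ∃ α : Fin n → Bool, ∀ j : Fin m, SatClause α (c j) ↔ VisitsClause p (c j)) ∧
    (∀ α : Fin n → Bool, ∃ p, IsClausePath hn p ∧
      ∀ j : Fin m, SatClause α (c j) ↔ VisitsClause p (c j)) ∧
    (∀ k : ℕ,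
      ((∃ p, IsClausePath hn p ∧ k ≤ {j : Fin m | VisitsClause p (c j)}.ncard) ↔
        (∃ α : Fin n → Bool, k ≤ {j : Fin m | SatClause α (c j)}.ncard)) ∧
      ((∃ p, IsClausePath hn p ∧ {j : Fin m | VisitsClause p (c j)}.ncard ≤ k) ↔
        (∃ α : Fin n → Bool, {j : Fin m | SatClause α (c j)}.ncard ≤ k))) := by
  have paths_to_assignments : ∀ p, IsClausePath hn p →
      ∃ α : Fin n → Bool, ∀ j : Fin m, SatClause α (c j) ↔ VisitsClause p (c j) := by
    intro p hp
    obtain ⟨α, rfl⟩ := hp.exists_eq_assignmentPath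
    exact ⟨α, fun j => (visitsClause_assignmentPath_iff hn α (c j)).symm⟩
  have assignments_to_paths : ∀ α : Fin n → Bool, ∃ p, IsClausePath hn p ∧
      ∀ j : Fin m, SatClause α (c j) ↔ VisitsClause p (c j) := fun α =>
    ⟨assignmentPath hn α, isClausePath_assignmentPath hn α,
      fun j => (visitsClause_assignmentPath_iff hn α (c j)).symm⟩
  refine ⟨paths_to_assignments, assignments_to_paths, fun k => ⟨?_, ?_⟩⟩
  · exact exists_setOf_iff_exists_setOf paths_to_assignments assignments_to_paths
      (fun s => k ≤ s.ncard)
  · exact exists_setOf_iff_exists_setOf paths_to_assignments assignments_to_paths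
      (fun s => s.ncard ≤ k)
end

section
/- Let G = (V, E) be a finite directed graph in which every vertex has at least one outgoing edge, let s ∈ V, and let T ⊆ V be a set of target vertices. Then the minimum, over all infinite paths π from s, of the number of vertices of T visited by π equals the minimum, over all lassos from s, of the number of vertices of T occurring on the lasso. -/
/-!
An infinite path in a finite graph must repeat a vertex; cutting it just before its first
repetition gives a lasso whose vertices the path visits, so the lasso meets at most as many
targets. Conversely, running around the loop of a lasso forever gives an infinite path
visiting exactly the vertices of the lasso.
-/

/-- The indices `0, 1, …, m - 1, i, i + 1, …, m - 1, i, …` of the unrolled lasso. -/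
def lassoIndex (m i : ℕ) : ℕ → ℕ
  | 0 => 0
  | n + 1 => if lassoIndex m i n + 1 = m then i else lassoIndex m i n + 1

section LassoIndex

variable {m i : ℕ}

theorem lassoIndex_lt (hi : i < m) : ∀ n, lassoIndex m i n < m
  | 0 => Nat.zero_lt_of_lt hi
  | n + 1 => by
    rw [lassoIndex]
    split_ifs with h
    · exact hi
    · exact lt_of_le_of_ne (lassoIndex_lt hi n) h

theorem lassoIndex_of_lt : ∀ n, n < m → lassoIndex m i n = n
  | 0, _ => rfl
  | n + 1, hn => by
    rw [lassoIndex, lassoIndex_of_lt n (Nat.lt_of_succ_lt hn), if_neg hn.ne]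

theorem range_lassoIndex (hi : i < m) : Set.range (lassoIndex m i) = Set.Iio m :=
  Set.Subset.antisymm (Set.range_subset_iff.2 (lassoIndex_lt hi))
    fun n hn => ⟨n, lassoIndex_of_lt n hn⟩

end LassoIndex

theorem exists_path_of_lasso {V : Type*} (E : V → V → Prop) {m i : ℕ} {q : ℕ → V}
    (hi : i < m) (hq : ∀ j < m, E (q j) (q (j + 1))) (hqm : q m = q i) :
    ∃ p : ℕ → V, p 0 = q 0 ∧ (∀ n, E (p n) (p (n + 1))) ∧ Set.range p = q '' Set.Iic m := by
  refine ⟨q ∘ lassoIndex m i, rfl, fun n => ?_, ?_⟩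
  · have hnext : q (lassoIndex m i (n + 1)) = q (lassoIndex m i n + 1) := by
      rw [lassoIndex]
      split_ifs with h
      · rw [h, hqm]
      · rfl
    simpa only [Function.comp_apply, hnext] using hq _ (lassoIndex_lt hi n)
  · rw [Set.range_comp, range_lassoIndex hi, ← Set.Iio_insert, Set.image_insert_eq,
      hqm, Set.insert_eq_of_mem (Set.mem_image_of_mem q (Set.mem_Iio.2 hi))]

theorem Finite.exists_first_repeat {β : Type*} [Finite β] (f : ℕ → β) :
    ∃ m, Set.InjOn f (Set.Iio m) ∧ ∃ i < m, f m = f i := by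
  classical
  have hrep : ∃ j, ∃ i < j, f j = f i := by
    obtain ⟨x, y, hxy, hf⟩ := Finite.exists_ne_map_eq_of_infinite f
    rcases hxy.lt_or_gt with h | h
    · exact ⟨y, x, h, hf.symm⟩
    · exact ⟨x, y, h, hf⟩
  refine ⟨Nat.find hrep, fun j hj j' hj' hf => ?_, Nat.find_spec hrep⟩
  by_contra hne
  rcases Ne.lt_or_gt hne with h | h
  · exact Nat.find_min hrep hj' ⟨j, h, hf.symm⟩
  · exact Nat.find_min hrep hj ⟨j', h, hf⟩

theorem min_targets_eq_min_lasso_general {V : Type*} [Fintype V]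
    (E : V → V → Prop) (s : V) (T : Set V) :
    sInf {c : ℕ | ∃ p : ℕ → V, p 0 = s ∧ (∀ i, E (p i) (p (i + 1))) ∧
        c = (T ∩ {v | ∃ i, p i = v}).ncard} =
    sInf {c : ℕ | ∃ (m : ℕ) (q : ℕ → V), q 0 = s ∧
        (∀ j, j < m → E (q j) (q (j + 1))) ∧
        (∀ j j', j < m → j' < m → q j = q j' → j = j') ∧
        (∃ i, i < m ∧ q m = q i) ∧
        c = (T ∩ {v | ∃ j ≤ m, q j = v}).ncard} := by
  apply csInf_eq_csInf_of_forall_exists_le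
  · rintro c ⟨p, rfl, hp, rfl⟩
    obtain ⟨m, hinj, i, hi, hpm⟩ := Finite.exists_first_repeat p
    refine ⟨_, ⟨m, p, rfl, fun j _ => hp j, fun _ _ hj hj' => hinj hj hj', ⟨i, hi, hpm⟩,
      rfl⟩, Set.ncard_le_ncard ?_ (Set.toFinite _)⟩
    exact Set.inter_subset_inter_right T (Set.image_subset_range p (Set.Iic m))
  · rintro c ⟨m, q, rfl, hq, -, ⟨i, hi, hqm⟩, rfl⟩
    obtain ⟨p, hp0, hp, hrange⟩ := exists_path_of_lasso E hi hq hqm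
    exact ⟨_, ⟨p, hp0, hp, rfl⟩, (congrArg (fun S => (T ∩ S).ncard) hrange).le⟩

/-- in a finite directed graph where every vertex has an outgoing
edge, the minimum number of target vertices of `T` visited by an infinite path
from `s` equals the minimum number of target vertices of `T` occurring on a
lasso from `s`. A lasso is a finite path `q 0 ... q m` from `s` whose first `m`
vertices are pairwise distinct and whose last vertex repeats an earlier one. -/
theorem min_targets_eq_min_lasso {V : Type*} [Fintype V]
    (E : V → V → Prop) (hE : ∀ v, ∃ w, E v w) (s : V) (T : Set V) :
    sInf {c : ℕ | ∃ p : ℕ → V, p 0 = s ∧ (∀ i, E (p i) (p (i + 1))) ∧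
        c = (T ∩ {v | ∃ i, p i = v}).ncard} =
    sInf {c : ℕ | ∃ (m : ℕ) (q : ℕ → V), q 0 = s ∧
        (∀ j, j < m → E (q j) (q (j + 1))) ∧
        (∀ j j', j < m → j' < m → q j = q j' → j = j') ∧
        (∃ i, i < m ∧ q m = q i) ∧
        c = (T ∩ {v | ∃ j ≤ m, q j = v}).ncard} :=
  min_targets_eq_min_lasso_general E s T
end
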